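/- arXiv:2209.00449 — 3 statements merged into one kernel-verified Lean document; each statement's English description precedes it below -/
import Mathlib

section
/- Let A be a d×d complex matrix with spectral radius equal to 1. Then there exists an integer k with 0 ≤ k < d and constants 0 < c ≤ C such that c·n^k ≤ ‖A^n‖ ≤ C·n^k for all n ≥ 1, where ‖·‖ is the operator norm. -/
open scoped ENNReal NNReal

/-- The operator norm induced by the Euclidean norm on `ℂ^d`. -/
noncomputable def eOpNorm {m n : Type*} [Fintype m] [Fintype n] [DecidableEq n]
    (A : Matrix m n ℂ) : ℝ :=
  ‖LinearMap.toContinuousLinearMap (Matrix.toEuclideanLin A)‖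

private lemma aux_geom (r : ℝ) (hr0 : 0 ≤ r) (hr1 : r < 1) (j : ℕ) :
    ∃ B : ℝ, 0 ≤ B ∧ ∀ n : ℕ, (n : ℝ) ^ j * r ^ n ≤ B := by
  have hs : Summable (fun n : ℕ => (n : ℝ) ^ j * r ^ n) :=
    summable_pow_mul_geometric_of_norm_lt_one (R := ℝ) j
      (by rwa [Real.norm_eq_abs, abs_of_nonneg hr0])
  have hb : BddAbove (Set.range fun n : ℕ => (n : ℝ) ^ j * r ^ n) :=
    hs.tendsto_atTop_zero.isBoundedUnder_le.bddAbove_range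
  obtain ⟨B, hB⟩ := hb
  exact ⟨B, le_trans (by positivity) (hB ⟨0, rfl⟩), fun n => hB ⟨n, rfl⟩⟩

private lemma aux_choose_lower (n k : ℕ) (hn : 2 * k ≤ n) :
    ((n : ℝ) / 2) ^ k / (k.factorial : ℝ) ≤ (n.choose k : ℝ) := by
  have h1 : ((n + 1 - k : ℕ) : ℝ) ^ k ≤ (k.factorial : ℝ) * (n.choose k : ℝ) := by
    exact_mod_cast calc (n + 1 - k) ^ k ≤ n.descFactorial k := Nat.pow_sub_le_descFactorial n k
      _ = k.factorial * n.choose k := Nat.descFactorial_eq_factorial_mul_choose n k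
  have h2 : ((n : ℝ) / 2) ^ k ≤ ((n + 1 - k : ℕ) : ℝ) ^ k := by
    apply pow_le_pow_left₀ (by positivity)
    have hc : ((n + 1 - k : ℕ) : ℝ) = (n : ℝ) + 1 - k := by
      have : k ≤ n + 1 := by omega
      push_cast [Nat.cast_sub this]; ring
    rw [hc]
    have : (k : ℝ) ≤ (n : ℝ) / 2 := by
      have h2k := (Nat.cast_le (α := ℝ)).2 hn
      push_cast at h2k; linarith
    linarith
  have hf : (0 : ℝ) < k.factorial := by exact_mod_cast k.factorial_pos
  rw [div_le_iff₀ hf]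
  calc ((n : ℝ) / 2) ^ k ≤ ((n + 1 - k : ℕ) : ℝ) ^ k := h2
    _ ≤ (k.factorial : ℝ) * (n.choose k : ℝ) := h1
    _ = (n.choose k : ℝ) * k.factorial := by ring

private lemma aux_binom {V : Type*} [AddCommGroup V] [Module ℂ V]
    (f : Module.End ℂ V) (μ : ℂ) (n : ℕ) (w : V) :
    (f ^ n) w = ∑ j ∈ Finset.range (n + 1),
      ((n.choose j : ℂ) * μ ^ (n - j)) • (((f - μ • 1) ^ j) w) := by
  set N := f - μ • (1 : Module.End ℂ V) with hN
  have hc : Commute N (μ • (1 : Module.End ℂ V)) := (Commute.one_right N).smul_right μ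
  have hf : f = N + μ • 1 := by rw [hN]; abel
  rw [hf, hc.add_pow, LinearMap.sum_apply]
  refine Finset.sum_congr rfl fun j hj => ?_
  simp only [smul_pow, one_pow, Module.End.mul_apply, LinearMap.smul_apply,
    Module.End.one_apply, Module.End.natCast_apply, map_smul, map_nsmul, mul_smul]
  rw [Nat.cast_smul_eq_nsmul, smul_comm]

private lemma aux_spec {A : Type*} [Ring A] [Algebra ℂ A] (a : A) (hfin : (spectrum ℂ a).Finite)
    (h : spectralRadius ℂ a = 1) :
    (∀ μ ∈ spectrum ℂ a, ‖μ‖ ≤ 1) ∧ ∃ μ ∈ spectrum ℂ a, ‖μ‖ = 1 := by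
  have hle : ∀ μ ∈ spectrum ℂ a, ‖μ‖ ≤ 1 := by
    intro μ hμ
    have h1 : (‖μ‖₊ : ℝ≥0∞) ≤ spectralRadius ℂ a := le_iSup₂ (f := fun μ _ => (‖μ‖₊ : ℝ≥0∞)) μ hμ
    rw [h] at h1
    have : ‖μ‖₊ ≤ 1 := by exact_mod_cast h1
    exact_mod_cast this
  refine ⟨hle, ?_⟩
  have hne : (spectrum ℂ a).Nonempty := by
    by_contra hcon
    rw [Set.not_nonempty_iff_eq_empty] at hcon
    rw [spectralRadius, hcon] at h
    simp at h
  obtain ⟨μ₀, hμ₀, hmax'⟩ := Set.Finite.exists_maximalFor (fun μ => ‖μ‖) _ hfin hne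
  have hmax : ∀ μ ∈ spectrum ℂ a, ‖μ₀‖ ≤ ‖μ‖ → ‖μ₀‖ = ‖μ‖ :=
    fun μ hμ h => le_antisymm h (hmax' hμ h)
  refine ⟨μ₀, hμ₀, le_antisymm (hle _ hμ₀) ?_⟩
  by_contra hcon
  push_neg at hcon
  have hub : spectralRadius ℂ a ≤ (‖μ₀‖₊ : ℝ≥0∞) := by
    refine iSup₂_le fun μ hμ => ?_
    have : ‖μ‖ ≤ ‖μ₀‖ := by
      rcases le_or_gt ‖μ‖ ‖μ₀‖ with h' | h'
      · exact h'
      · exact (hmax μ hμ h'.le).ge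
    exact_mod_cast this
  rw [h] at hub
  have h1 : (1 : ℝ≥0) ≤ ‖μ₀‖₊ := by exact_mod_cast hub
  have : (1 : ℝ) ≤ ‖μ₀‖ := by exact_mod_cast h1
  linarith

private lemma aux_proj {V : Type*} [AddCommGroup V] [Module ℂ V] [FiniteDimensional ℂ V]
    (f : Module.End ℂ V) (S : Finset ℂ)
    (hS : ∀ μ : ℂ, f.maxGenEigenspace μ ≠ ⊥ → μ ∈ S) :
    ∃ P : ℂ → (V →ₗ[ℂ] V), (∀ μ v, P μ v ∈ f.maxGenEigenspace μ) ∧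
      ∀ v, ∑ μ ∈ S, P μ v = v := by
  classical
  set G : ℂ → Submodule ℂ V := fun μ => f.maxGenEigenspace μ with hG
  have htop : ⨆ μ, G μ = ⊤ := Module.End.iSup_maxGenEigenspace_eq_top f
  have hind : iSupIndep G := f.independent_genEigenspace ⊤
  have hcompl : ∀ μ, IsCompl (G μ) (⨆ ν, ⨆ _ : ν ≠ μ, G ν) := by
    intro μ
    refine ⟨hind μ, codisjoint_iff.mpr ?_⟩
    rw [← top_le_iff, ← htop]
    refine iSup_le fun ν => ?_
    by_cases h : ν = μ
    · subst h; exact le_sup_left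
    · exact le_trans (le_iSup₂ (f := fun ν (_ : ν ≠ μ) => G ν) ν h) le_sup_right
  set P : ℂ → (V →ₗ[ℂ] V) := fun μ =>
    (G μ).subtype ∘ₗ (G μ).linearProjOfIsCompl _ (hcompl μ) with hP
  refine ⟨P, fun μ v => Submodule.coe_mem _, ?_⟩
  intro v
  have hv : v ∈ ⨆ μ, G μ := htop ▸ Submodule.mem_top
  refine Submodule.iSup_induction (motive := fun x => ∑ μ ∈ S, P μ x = x) G hv ?_ ?_ ?_
  · intro ν x hx
    by_cases hνS : ν ∈ S
    · rw [Finset.sum_eq_single ν]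
      · simpa [P, Submodule.linearProjOfIsCompl] using hx
      · intro μ hμS hμν
        have hxq : x ∈ ⨆ ν', ⨆ _ : ν' ≠ μ, G ν' :=
          Submodule.mem_iSup_of_mem ν
            (Submodule.mem_iSup_of_mem (by exact fun h => hμν h.symm) hx)
        simp [P, Submodule.linearProjOfIsCompl, Submodule.linearProjOfIsCompl_apply_right' (hcompl μ) hxq]
      · exact fun h => absurd hνS h
    · have : G ν = ⊥ := by
        by_contra h; exact hνS (hS ν h)
      rw [this] at hx
      simp only [Submodule.mem_bot] at hx
      subst hx
      simp
  · simp
  · intro x y hx hy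
    simp [Finset.sum_add_distrib, hx, hy]


set_option maxHeartbeats 2000000 in
private lemma aux_main {V : Type*} [NormedAddCommGroup V] [NormedSpace ℂ V]
    [FiniteDimensional ℂ V] (f : Module.End ℂ V) (hd : 0 < Module.finrank ℂ V)
    (hle' : ∀ μ ∈ spectrum ℂ f, ‖μ‖ ≤ 1)
    (μ₀ : ℂ) (hμ₀spec : μ₀ ∈ spectrum ℂ f) (hμ₀ : ‖μ₀‖ = 1) :
    ∃ k : ℕ, k < Module.finrank ℂ V ∧ ∃ c C : ℝ, 0 < c ∧ c ≤ C ∧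
      ∀ n : ℕ, 1 ≤ n →
        c * (n : ℝ) ^ k ≤ ‖LinearMap.toContinuousLinearMap (f ^ n)‖ ∧
        ‖LinearMap.toContinuousLinearMap (f ^ n)‖ ≤ C * (n : ℝ) ^ k := by
  classical
  set D : ℕ := Module.finrank ℂ V with hDdef
  have hOp1 : ∀ (g : Module.End ℂ V) (w : V),
      ‖g w‖ ≤ ‖LinearMap.toContinuousLinearMap g‖ * ‖w‖ := fun g w => by
    simpa using (LinearMap.toContinuousLinearMap g).le_opNorm w
  have hOp2 : ∀ (g : Module.End ℂ V) (C : ℝ), 0 ≤ C → (∀ w, ‖g w‖ ≤ C * ‖w‖) →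
      ‖LinearMap.toContinuousLinearMap g‖ ≤ C := fun g C hC h =>
    ContinuousLinearMap.opNorm_le_bound _ hC (by simpa using h)
  have hfin : (spectrum ℂ f).Finite := Module.End.finite_spectrum f
  set G : ℂ → Submodule ℂ V := fun μ => f.maxGenEigenspace μ with hGdef
  set N : ℂ → Module.End ℂ V := fun μ => f - μ • 1 with hNdef
  have hG_nilp : ∀ μ : ℂ, ∀ w ∈ G μ, ((N μ) ^ D) w = 0 := by
    intro μ w hw
    have hw' : w ∈ f.maxGenEigenspace μ := hw
    rw [Module.End.maxGenEigenspace_eq_genEigenspace_finrank,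
      Module.End.mem_genEigenspace_nat] at hw'
    exact hw'
  have hm_ex : ∀ μ : ℂ, ∃ m : ℕ, ∀ w ∈ G μ, ((N μ) ^ m) w = 0 := fun μ => ⟨D, hG_nilp μ⟩
  set m : ℂ → ℕ := fun μ => Nat.find (hm_ex μ) with hmdef
  have hm_le : ∀ μ, m μ ≤ D := fun μ => Nat.find_min' (hm_ex μ) (hG_nilp μ)
  have hm_spec : ∀ μ, ∀ w ∈ G μ, ((N μ) ^ (m μ)) w = 0 := fun μ => Nat.find_spec (hm_ex μ)
  have hEV : ∀ μ ∈ spectrum ℂ f, ∃ w ∈ G μ, w ≠ 0 := by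
    intro μ hμ
    obtain ⟨w, hw⟩ := (Module.End.HasEigenvalue.of_mem_spectrum hμ).exists_hasEigenvector
    exact ⟨w, (f.genEigenspace μ).monotone le_top hw.1, hw.2⟩
  have hm_pos : ∀ μ ∈ spectrum ℂ f, 0 < m μ := by
    intro μ hμ
    rcases Nat.eq_zero_or_pos (m μ) with h0 | h
    · obtain ⟨w, hw, hw0⟩ := hEV μ hμ
      have := hm_spec μ w hw
      rw [h0, pow_zero] at this
      exact absurd this hw0
    · exact h
  have hwit : ∀ μ ∈ spectrum ℂ f, ∃ v ∈ G μ, ((N μ) ^ (m μ - 1)) v ≠ 0 := by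
    intro μ hμ
    have hlt : m μ - 1 < m μ := by have := hm_pos μ hμ; omega
    have := Nat.find_min (hm_ex μ) hlt
    push_neg at this
    obtain ⟨v, hv, hv0⟩ := this
    exact ⟨v, hv, hv0⟩
  have hG_bot : ∀ μ : ℂ, μ ∉ spectrum ℂ f → G μ = ⊥ := by
    intro μ hμ
    by_contra h
    apply hμ
    have h' : f.maxGenEigenspace μ ≠ ⊥ := h
    rw [Module.End.maxGenEigenspace_eq_genEigenspace_finrank] at h'
    exact (Module.End.hasEigenvalue_of_hasGenEigenvalue
      (Module.End.hasGenEigenvalue_iff.mpr h')).mem_spectrum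
  clear_value m
  -- the exponent k
  set S : Finset ℂ := hfin.toFinset with hSdef
  set S1 : Finset ℂ := S.filter (fun μ => ‖μ‖ = 1) with hS1def
  have hμ₀S1 : μ₀ ∈ S1 := by
    rw [hS1def, Finset.mem_filter, hSdef, Set.Finite.mem_toFinset]
    exact ⟨hμ₀spec, hμ₀⟩
  obtain ⟨lam, hlamS1, hlmax⟩ := S1.exists_max_image (fun μ => m μ - 1) ⟨μ₀, hμ₀S1⟩
  have hlamS : lam ∈ spectrum ℂ f := by
    have h' := (Finset.mem_filter.mp hlamS1).1
    rwa [hSdef, Set.Finite.mem_toFinset] at h'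
  have hlam1 : ‖lam‖ = 1 := by
    have h' := Finset.mem_filter.mp hlamS1
    exact h'.2
  set k : ℕ := m lam - 1 with hkdef
  have hkD : k < D := lt_of_lt_of_le (by have := hm_pos lam hlamS; omega) (hm_le lam)
  -- truncated binomial expansion
  have htrunc : ∀ (μ : ℂ) (n : ℕ), ∀ w ∈ G μ, (f ^ n) w =
      ∑ j ∈ Finset.range (min (n + 1) (m μ)),
        ((n.choose j : ℂ) * μ ^ (n - j)) • (((N μ) ^ j) w) := by
    intro μ n w hw
    rw [show ((N μ : Module.End ℂ V)) = f - μ • 1 from rfl]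
    rw [aux_binom f μ n w]
    refine (Finset.sum_subset ?_ ?_).symm
    · intro j hj
      rw [Finset.mem_range] at hj ⊢
      omega
    · intro j hj hj'
      rw [Finset.mem_range] at hj hj'
      have hjm : m μ ≤ j := by omega
      have hz : ((f - μ • 1 : Module.End ℂ V) ^ j) w = 0 := by
        rw [show j = (j - m μ) + m μ by omega, pow_add, Module.End.mul_apply]
        rw [show ((f - μ • 1 : Module.End ℂ V)) = N μ from rfl, hm_spec μ w hw, map_zero]
      rw [hz, smul_zero]
  -- per-eigenvalue upper bound
  have hUB : ∀ μ : ℂ, ∃ B : ℝ, 0 ≤ B ∧ ∀ n : ℕ, 1 ≤ n → ∀ w ∈ G μ,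
      ‖(f ^ n) w‖ ≤ B * (n : ℝ) ^ k * ‖w‖ := by
    intro μ
    by_cases hμs : μ ∈ spectrum ℂ f
    swap
    · refine ⟨0, le_rfl, fun n hn w hw => ?_⟩
      rw [hG_bot μ hμs, Submodule.mem_bot] at hw
      subst hw
      simp
    · set a : ℕ → ℝ := fun j => ‖LinearMap.toContinuousLinearMap ((N μ) ^ j)‖ with hadef
      have ha0 : ∀ j, 0 ≤ a j := fun j => norm_nonneg _
      have hbound : ∀ n j (w : V), ‖((n.choose j : ℂ) * μ ^ (n - j)) • (((N μ) ^ j) w)‖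
          ≤ ((n.choose j : ℝ) * ‖μ‖ ^ (n - j)) * (a j * ‖w‖) := by
        intro n j w
        rw [norm_smul, norm_mul, norm_pow, Complex.norm_natCast]
        exact mul_le_mul_of_nonneg_left (hOp1 _ w) (by positivity)
      by_cases h1 : ‖μ‖ = 1
      -- case of unit eigenvalue
      · refine ⟨∑ j ∈ Finset.range (m μ), a j, Finset.sum_nonneg fun j _ => ha0 j,
          fun n hn w hw => ?_⟩
        have hkμ : m μ - 1 ≤ k := by
          refine hlmax μ ?_
          rw [hS1def, Finset.mem_filter, hSdef, Set.Finite.mem_toFinset]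
          exact ⟨hμs, h1⟩
        rw [htrunc μ n w hw]
        calc ‖∑ j ∈ Finset.range (min (n + 1) (m μ)),
              ((n.choose j : ℂ) * μ ^ (n - j)) • (((N μ) ^ j) w)‖
            ≤ ∑ j ∈ Finset.range (min (n + 1) (m μ)),
              ‖((n.choose j : ℂ) * μ ^ (n - j)) • (((N μ) ^ j) w)‖ := norm_sum_le _ _
          _ ≤ ∑ j ∈ Finset.range (min (n + 1) (m μ)), (n : ℝ) ^ k * (a j * ‖w‖) := by
              refine Finset.sum_le_sum fun j hj => ?_
              refine le_trans (hbound n j w) ?_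
              refine mul_le_mul_of_nonneg_right ?_ (by positivity)
              rw [h1, one_pow, mul_one]
              have hjk : j ≤ k := by
                rw [Finset.mem_range] at hj
                have hjm : j < m μ := by omega
                omega
              calc (n.choose j : ℝ) ≤ (n : ℝ) ^ j := by exact_mod_cast Nat.choose_le_pow n j
                _ ≤ (n : ℝ) ^ k := pow_le_pow_right₀ (by exact_mod_cast hn) hjk
          _ ≤ ∑ j ∈ Finset.range (m μ), (n : ℝ) ^ k * (a j * ‖w‖) := by
              refine Finset.sum_le_sum_of_subset_of_nonneg ?_ (fun j _ _ => by positivity)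
              intro j hj
              rw [Finset.mem_range] at hj ⊢
              omega
          _ = (∑ j ∈ Finset.range (m μ), a j) * (n : ℝ) ^ k * ‖w‖ := by
              rw [Finset.sum_mul, Finset.sum_mul]
              refine Finset.sum_congr rfl fun j _ => by ring
      -- case of small eigenvalue
      · have hr1 : ‖μ‖ < 1 := lt_of_le_of_ne (hle' μ hμs) h1
        set r : ℝ := max ‖μ‖ (1/2) with hrdef
        have hr0 : (0:ℝ) < r := lt_of_lt_of_le (by norm_num) (le_max_right _ _)
        have hrlt : r < 1 := by
          rw [hrdef]
          exact max_lt hr1 (by norm_num)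
        have hrμ : ‖μ‖ ≤ r := le_max_left _ _
        have hrhalf : 1/2 ≤ r := le_max_right _ _
        choose Bg hBg0 hBg using fun j => aux_geom r hr0.le hrlt j
        refine ⟨∑ j ∈ Finset.range (m μ), 2 ^ j * Bg j * a j,
          Finset.sum_nonneg fun j _ =>
            mul_nonneg (mul_nonneg (by positivity) (hBg0 j)) (ha0 j), fun n hn w hw => ?_⟩
        rw [htrunc μ n w hw]
        have hterm : ∀ j ∈ Finset.range (min (n + 1) (m μ)),
            ‖((n.choose j : ℂ) * μ ^ (n - j)) • (((N μ) ^ j) w)‖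
            ≤ (2 ^ j * Bg j * a j) * ‖w‖ := by
          intro j hj
          rw [Finset.mem_range] at hj
          have hjn : j ≤ n := by omega
          refine le_trans (hbound n j w) ?_
          have hc1 : (n.choose j : ℝ) * ‖μ‖ ^ (n - j) ≤ 2 ^ j * ((n:ℝ) ^ j * r ^ n) := by
            have e1 : (n.choose j : ℝ) ≤ (n : ℝ) ^ j := by exact_mod_cast Nat.choose_le_pow n j
            have e2 : ‖μ‖ ^ (n - j) ≤ r ^ (n - j) := pow_le_pow_left₀ (norm_nonneg μ) hrμ _
            have e3 : r ^ (n - j) ≤ 2 ^ j * r ^ n := by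
              have hpow : r ^ (n - j) * r ^ j = r ^ n := pow_sub_mul_pow r hjn
              have hrj : (0:ℝ) < r ^ j := by positivity
              rw [← hpow]
              have h2 : (1:ℝ) ≤ 2 ^ j * r ^ j := by
                calc (1:ℝ) = (1/2 * 2) ^ j := by norm_num
                  _ = 2 ^ j * (1/2) ^ j := by rw [mul_pow]; ring
                  _ ≤ 2 ^ j * r ^ j := by
                      refine mul_le_mul_of_nonneg_left ?_ (by positivity)
                      exact pow_le_pow_left₀ (by norm_num) hrhalf _
              calc r ^ (n - j) = r ^ (n - j) * 1 := by ring
                _ ≤ r ^ (n - j) * (2 ^ j * r ^ j) := by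
                    exact mul_le_mul_of_nonneg_left h2 (by positivity)
                _ = 2 ^ j * (r ^ (n - j) * r ^ j) := by ring
            calc (n.choose j : ℝ) * ‖μ‖ ^ (n - j) ≤ (n:ℝ) ^ j * (2 ^ j * r ^ n) := by
                  refine mul_le_mul e1 (e2.trans e3) (by positivity) (by positivity)
              _ = 2 ^ j * ((n:ℝ) ^ j * r ^ n) := by ring
          have hc2 : (n:ℝ) ^ j * r ^ n ≤ Bg j := hBg j n
          calc (n.choose j : ℝ) * ‖μ‖ ^ (n - j) * (a j * ‖w‖)
              ≤ (2 ^ j * ((n:ℝ) ^ j * r ^ n)) * (a j * ‖w‖) := by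
                refine mul_le_mul_of_nonneg_right hc1 (by positivity)
            _ ≤ (2 ^ j * Bg j) * (a j * ‖w‖) := by
                refine mul_le_mul_of_nonneg_right ?_ (by positivity)
                exact mul_le_mul_of_nonneg_left hc2 (by positivity)
            _ = (2 ^ j * Bg j * a j) * ‖w‖ := by ring
        calc ‖∑ j ∈ Finset.range (min (n + 1) (m μ)),
              ((n.choose j : ℂ) * μ ^ (n - j)) • (((N μ) ^ j) w)‖
            ≤ ∑ j ∈ Finset.range (min (n + 1) (m μ)),
              ‖((n.choose j : ℂ) * μ ^ (n - j)) • (((N μ) ^ j) w)‖ := norm_sum_le _ _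
          _ ≤ ∑ j ∈ Finset.range (min (n + 1) (m μ)), (2 ^ j * Bg j * a j) * ‖w‖ :=
              Finset.sum_le_sum hterm
          _ ≤ ∑ j ∈ Finset.range (m μ), (2 ^ j * Bg j * a j) * ‖w‖ := by
              refine Finset.sum_le_sum_of_subset_of_nonneg ?_ (fun j _ _ =>
                mul_nonneg (mul_nonneg (mul_nonneg (by positivity) (hBg0 j)) (ha0 j))
                  (norm_nonneg w))
              intro j hj
              rw [Finset.mem_range] at hj ⊢
              omega
          _ = (∑ j ∈ Finset.range (m μ), 2 ^ j * Bg j * a j) * ‖w‖ := by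
              rw [Finset.sum_mul]
          _ ≤ (∑ j ∈ Finset.range (m μ), 2 ^ j * Bg j * a j) * (n : ℝ) ^ k * ‖w‖ := by
              have h1n : (1:ℝ) ≤ (n:ℝ) ^ k := one_le_pow₀ (by exact_mod_cast hn)
              have hBpos : 0 ≤ (∑ j ∈ Finset.range (m μ), 2 ^ j * Bg j * a j) :=
                Finset.sum_nonneg fun j _ =>
                  mul_nonneg (mul_nonneg (by positivity) (hBg0 j)) (ha0 j)
              nlinarith [norm_nonneg w, mul_nonneg hBpos (norm_nonneg w)]
  -- global upper bound
  obtain ⟨P, hPmem, hPsum⟩ := aux_proj f S (fun μ h => by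
    rw [hSdef, Set.Finite.mem_toFinset]
    by_contra hc
    exact h (hG_bot μ hc))
  choose B hB0 hB using hUB
  set C₁ : ℝ := ∑ μ ∈ S, B μ * ‖LinearMap.toContinuousLinearMap (P μ)‖ with hC₁def
  have hC₁0 : 0 ≤ C₁ := Finset.sum_nonneg fun μ _ => mul_nonneg (hB0 μ) (norm_nonneg _)
  have hupper : ∀ n : ℕ, 1 ≤ n →
      ‖LinearMap.toContinuousLinearMap (f ^ n)‖ ≤ C₁ * (n : ℝ) ^ k := by
    intro n hn
    refine hOp2 _ _ (by positivity) fun w => ?_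
    have hrw : (f ^ n) w = ∑ μ ∈ S, (f ^ n) (P μ w) := by
      conv_lhs => rw [← hPsum w]
      rw [map_sum]
    rw [hrw]
    calc ‖∑ μ ∈ S, (f ^ n) (P μ w)‖ ≤ ∑ μ ∈ S, ‖(f ^ n) (P μ w)‖ := norm_sum_le _ _
      _ ≤ ∑ μ ∈ S, B μ * (n:ℝ) ^ k * (‖LinearMap.toContinuousLinearMap (P μ)‖ * ‖w‖) := by
          refine Finset.sum_le_sum fun μ _ => ?_
          refine le_trans (hB μ n hn (P μ w) (hPmem μ w)) ?_
          exact mul_le_mul_of_nonneg_left (hOp1 _ w)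
            (mul_nonneg (hB0 μ) (by positivity))
      _ = C₁ * (n:ℝ) ^ k * ‖w‖ := by
          rw [hC₁def, Finset.sum_mul, Finset.sum_mul]
          refine Finset.sum_congr rfl fun μ _ => by ring
  -- lower bound witness vector
  obtain ⟨v, hvG, hvk⟩ := hwit lam hlamS
  have hmlam : m lam = k + 1 := by have := hm_pos lam hlamS; omega
  rw [← hkdef] at hvk
  have hv0 : v ≠ 0 := fun h => hvk (by rw [h, map_zero])
  have hvn : (0:ℝ) < ‖v‖ := norm_pos_iff.mpr hv0
  set av : ℝ := ‖((N lam) ^ k) v‖ with havdef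
  have hav : 0 < av := norm_pos_iff.mpr hvk
  set Btot : ℝ := ∑ j ∈ Finset.range k, ‖((N lam) ^ j) v‖ with hBtotdef
  have hBtot0 : 0 ≤ Btot := Finset.sum_nonneg fun j _ => norm_nonneg _
  set ε : ℝ := av / (2 ^ k * k.factorial) with hεdef
  have hε : 0 < ε := by positivity
  clear_value av Btot ε
  -- f^n v ≠ 0 for all n
  have hGinv : ∀ w ∈ G lam, f w ∈ G lam :=
    fun w hw => Module.End.mapsTo_maxGenEigenspace_of_comm (Commute.refl f) lam hw
  have hlam0 : lam ≠ 0 := by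
    intro h
    rw [h, norm_zero] at hlam1
    norm_num at hlam1
  have hinj : ∀ w ∈ G lam, f w = 0 → w = 0 := by
    intro w hw hfw
    have h0 : w ∈ f.maxGenEigenspace 0 := by
      rw [Module.End.mem_maxGenEigenspace]
      exact ⟨1, by simpa using hfw⟩
    have hdisj := f.disjoint_genEigenspace hlam0 ⊤ ⊤
    exact (Submodule.disjoint_def.mp hdisj) w hw h0
  have hGn : ∀ n : ℕ, (f ^ n) v ∈ G lam := by
    intro n
    induction n with
    | zero => simpa using hvG
    | succ n ih =>
      rw [pow_succ', Module.End.mul_apply]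
      exact hGinv _ ih
  have hfn0 : ∀ n : ℕ, (f ^ n) v ≠ 0 := by
    intro n
    induction n with
    | zero => simpa using hv0
    | succ n ih =>
      rw [pow_succ', Module.End.mul_apply]
      intro h
      exact ih (hinj _ (hGn n) h)
  -- lower bound for large n
  set N₁ : ℕ := max (max (2 * k) (Nat.ceil (2 * Btot / ε))) 1 with hN₁def
  have hlowlarge : ∀ n : ℕ, N₁ ≤ n → ε / 2 * (n:ℝ) ^ k ≤ ‖(f ^ n) v‖ := by
    intro n hn
    have hn1 : 1 ≤ n := le_trans (le_max_right _ _) hn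
    have hn2k : 2 * k ≤ n := le_trans (le_trans (le_max_left _ _) (le_max_left _ _)) hn
    have hnk : k ≤ n := by omega
    have hnceil : 2 * Btot / ε ≤ (n:ℝ) := by
      refine le_trans (Nat.le_ceil _) ?_
      exact_mod_cast le_trans (le_trans (le_max_right _ _) (le_max_left _ _)) hn
    have hmin : min (n + 1) (m lam) = k + 1 := by
      rw [hmlam]; omega
    have htr : (f ^ n) v = (∑ j ∈ Finset.range k,
          ((n.choose j : ℂ) * lam ^ (n - j)) • (((N lam) ^ j) v))
        + ((n.choose k : ℂ) * lam ^ (n - k)) • (((N lam) ^ k) v) := by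
      rw [htrunc lam n v hvG, hmin, Finset.sum_range_succ]
    have hnormc : ∀ j, ‖((n.choose j : ℂ) * lam ^ (n - j))‖ = (n.choose j : ℝ) := by
      intro j
      rw [norm_mul, norm_pow, Complex.norm_natCast, hlam1, one_pow, mul_one]
    have hmain : ‖((n.choose k : ℂ) * lam ^ (n - k)) • (((N lam) ^ k) v)‖
        = (n.choose k : ℝ) * av := by
      rw [norm_smul, hnormc, havdef]
    have hrest : ‖∑ j ∈ Finset.range k,
        ((n.choose j : ℂ) * lam ^ (n - j)) • (((N lam) ^ j) v)‖ ≤ Btot * (n:ℝ) ^ (k-1) := by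
      calc ‖∑ j ∈ Finset.range k, ((n.choose j : ℂ) * lam ^ (n - j)) • (((N lam) ^ j) v)‖
          ≤ ∑ j ∈ Finset.range k, ‖((n.choose j : ℂ) * lam ^ (n - j)) • (((N lam) ^ j) v)‖ :=
            norm_sum_le _ _
        _ ≤ ∑ j ∈ Finset.range k, (n:ℝ) ^ (k-1) * ‖((N lam) ^ j) v‖ := by
            refine Finset.sum_le_sum fun j hj => ?_
            rw [Finset.mem_range] at hj
            rw [norm_smul, hnormc]
            refine mul_le_mul_of_nonneg_right ?_ (norm_nonneg _)
            calc (n.choose j : ℝ) ≤ (n:ℝ) ^ j := by exact_mod_cast Nat.choose_le_pow n j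
              _ ≤ (n:ℝ) ^ (k-1) := pow_le_pow_right₀ (by exact_mod_cast hn1) (by omega)
        _ = Btot * (n:ℝ) ^ (k-1) := by
            rw [hBtotdef, Finset.sum_mul]
            refine Finset.sum_congr rfl fun j _ => by ring
    have htri : (n.choose k : ℝ) * av - Btot * (n:ℝ) ^ (k-1) ≤ ‖(f ^ n) v‖ := by
      have h1 : ‖((n.choose k : ℂ) * lam ^ (n - k)) • (((N lam) ^ k) v)‖
          ≤ ‖(f ^ n) v‖ + ‖∑ j ∈ Finset.range k,
            ((n.choose j : ℂ) * lam ^ (n - j)) • (((N lam) ^ j) v)‖ := by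
        conv_lhs => rw [show ((n.choose k : ℂ) * lam ^ (n - k)) • (((N lam) ^ k) v)
          = (f ^ n) v - (∑ j ∈ Finset.range k,
            ((n.choose j : ℂ) * lam ^ (n - j)) • (((N lam) ^ j) v)) from by rw [htr]; abel]
        exact norm_sub_le _ _
      rw [hmain] at h1
      linarith
    have hchoose : ε * (n:ℝ) ^ k ≤ (n.choose k : ℝ) * av := by
      have := aux_choose_lower n k hn2k
      have h2 : ((n:ℝ)/2) ^ k / (k.factorial : ℝ) * av ≤ (n.choose k : ℝ) * av :=
        mul_le_mul_of_nonneg_right this hav.le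
      have h3 : ((n:ℝ)/2) ^ k / (k.factorial : ℝ) * av = ε * (n:ℝ) ^ k := by
        rw [hεdef, div_pow]
        field_simp
      linarith
    have hsmall : Btot * (n:ℝ) ^ (k-1) ≤ ε / 2 * (n:ℝ) ^ k := by
      rcases Nat.eq_zero_or_pos k with hk0 | hkpos
      · have hB0' : Btot = 0 := by rw [hBtotdef, hk0]; simp
        rw [hB0', hk0]
        simp only [pow_zero, Nat.zero_sub]
        nlinarith
      · have hk1 : k - 1 + 1 = k := by omega
        have hεn : 2 * Btot ≤ ε * (n:ℝ) := by
          rw [div_le_iff₀ hε] at hnceil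
          linarith
        have : (n:ℝ) ^ k = (n:ℝ) ^ (k-1) * (n:ℝ) := by
          rw [← pow_succ, hk1]
        rw [this]
        have hnn : (0:ℝ) ≤ (n:ℝ) ^ (k-1) := by positivity
        nlinarith
    linarith
  -- assemble constants
  have hIcc : (Finset.Icc 1 N₁).Nonempty := by
    refine ⟨1, Finset.mem_Icc.mpr ⟨le_refl 1, ?_⟩⟩
    exact le_max_right _ _
  set g : ℕ → ℝ := fun n => ‖(f ^ n) v‖ / (‖v‖ * (n:ℝ) ^ k) with hgdef
  set c₀ : ℝ := (Finset.Icc 1 N₁).inf' hIcc g with hc₀def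
  have hc₀pos : 0 < c₀ := by
    rw [hc₀def, Finset.lt_inf'_iff]
    intro i hi
    rw [Finset.mem_Icc] at hi
    have hi1 : 1 ≤ i := hi.1
    have : (0:ℝ) < ‖(f ^ i) v‖ := norm_pos_iff.mpr (hfn0 i)
    have hik : (0:ℝ) < (i:ℝ) ^ k := by positivity
    exact div_pos this (by positivity)
  set clow : ℝ := ε / (2 * ‖v‖) with hclowdef
  have hclowpos : 0 < clow := by positivity
  set c : ℝ := min c₀ clow with hcdef
  have hcpos : 0 < c := lt_min hc₀pos hclowpos
  refine ⟨k, hkD, c, max C₁ c, hcpos, le_max_right _ _, fun n hn => ?_⟩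
  have hnk : (0:ℝ) < (n:ℝ) ^ k := by
    have : (0:ℝ) < (n:ℝ) := by exact_mod_cast hn
    positivity
  constructor
  · -- lower bound
    have hbase : ∀ b : ℝ, b * ‖v‖ ≤ ‖(f ^ n) v‖ → b ≤ ‖LinearMap.toContinuousLinearMap (f ^ n)‖ := by
      intro b hb
      have := hOp1 (f ^ n) v
      have h2 : b * ‖v‖ ≤ ‖LinearMap.toContinuousLinearMap (f ^ n)‖ * ‖v‖ := le_trans hb this
      exact le_of_mul_le_mul_right h2 hvn
    rcases le_or_gt N₁ n with hcase | hcase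
    · -- large n
      refine hbase _ ?_
      have := hlowlarge n hcase
      calc c * (n:ℝ) ^ k * ‖v‖ ≤ clow * (n:ℝ) ^ k * ‖v‖ := by
            refine mul_le_mul_of_nonneg_right (mul_le_mul_of_nonneg_right
              (min_le_right _ _) hnk.le) hvn.le
        _ = ε / 2 * (n:ℝ) ^ k := by
            rw [hclowdef]
            field_simp
        _ ≤ ‖(f ^ n) v‖ := this
    · -- small n
      refine hbase _ ?_
      have hmem : n ∈ Finset.Icc 1 N₁ := Finset.mem_Icc.mpr ⟨hn, hcase.le⟩
      have hgn : c₀ ≤ g n := Finset.inf'_le g hmem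
      have hgval : g n * (‖v‖ * (n:ℝ) ^ k) = ‖(f ^ n) v‖ := by
        rw [hgdef]
        field_simp
      calc c * (n:ℝ) ^ k * ‖v‖ ≤ c₀ * (n:ℝ) ^ k * ‖v‖ := by
            refine mul_le_mul_of_nonneg_right (mul_le_mul_of_nonneg_right
              (min_le_left _ _) hnk.le) hvn.le
        _ ≤ g n * (n:ℝ) ^ k * ‖v‖ := by
            refine mul_le_mul_of_nonneg_right (mul_le_mul_of_nonneg_right hgn hnk.le) hvn.le
        _ = g n * (‖v‖ * (n:ℝ) ^ k) := by ring
        _ = ‖(f ^ n) v‖ := hgval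
  · -- upper bound
    refine le_trans (hupper n hn) ?_
    exact mul_le_mul_of_nonneg_right (le_max_left _ _) hnk.le

theorem stmt0 {d : ℕ} (hd : 0 < d) (A : Matrix (Fin d) (Fin d) ℂ)
    (hA : spectralRadius ℂ A = 1) :
    ∃ k : ℕ, k < d ∧ ∃ c C : ℝ, 0 < c ∧ c ≤ C ∧
      ∀ n : ℕ, 1 ≤ n →
        c * (n : ℝ) ^ k ≤ eOpNorm (A ^ n) ∧ eOpNorm (A ^ n) ≤ C * (n : ℝ) ^ k := by
  classical
  set e := Matrix.toLinAlgEquiv (PiLp.basisFun 2 ℂ (Fin d)) with he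
  set f : Module.End ℂ (EuclideanSpace ℂ (Fin d)) := e A with hf
  have heOp : ∀ n : ℕ, eOpNorm (A ^ n) = ‖LinearMap.toContinuousLinearMap (f ^ n)‖ := by
    intro n
    rw [eOpNorm, show Matrix.toEuclideanLin (A ^ n) = e (A ^ n) from rfl, map_pow]
  have hrank : Module.finrank ℂ (EuclideanSpace ℂ (Fin d)) = d := finrank_euclideanSpace_fin
  have hspec : spectrum ℂ f = spectrum ℂ A := AlgEquiv.spectrum_eq e A
  have hfin : (spectrum ℂ f).Finite := Module.End.finite_spectrum f
  obtain ⟨hle, μ₀, hμ₀spec, hμ₀⟩ := aux_spec A (hspec ▸ hfin) hA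
  obtain ⟨k, hk, c, C, hc, hcC, hmain⟩ := aux_main f (by rw [hrank]; exact hd)
    (fun μ hμ => hle μ (hspec ▸ hμ)) μ₀ (by rw [hspec]; exact hμ₀spec) hμ₀
  rw [hrank] at hk
  exact ⟨k, hk, c, C, hc, hcC, fun n hn => by rw [heOp n]; exact hmain n hn⟩
end

section
/- Let β > 0 and 0 < δ ≤ 1. Then there exists C > 0 such that for all real φ with sin φ ≠ 0 and all real p ≥ δ, |sin φ| + p|cos φ| ≤ (p^{2+β} + C/|sin φ|^β)^{1/(2+β)}. -/
/-!
Write `s = |sin φ|`. If `p s ≥ 2`, then `|cos φ| ≤ 1 - s² / 2` already gives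
`s + p |cos φ| ≤ p`. Otherwise `s < 2 / p`, so the left side is at most `p + 2 / p`, and by
convexity of `t ↦ t ^ (2 + β)` we have `(p + 2 / p) ^ (2 + β) - p ^ (2 + β) = O(p ^ β)` uniformly
in `p ≥ δ`; finally `p ^ β < 2 ^ β / s ^ β`.
-/

open Real

theorem abs_cos_le_one_sub_sq_abs_sin_div_two (φ : ℝ) : |cos φ| ≤ 1 - |sin φ| ^ 2 / 2 := by
  have h : |sin φ| ^ 2 + |cos φ| ^ 2 = 1 := by rw [sq_abs, sq_abs, sin_sq_add_cos_sq]
  nlinarith [abs_nonneg (cos φ), abs_cos_le_one φ]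

theorem abs_sin_add_mul_abs_cos_le_of_two_le_mul {φ p : ℝ} (h : 2 ≤ p * |sin φ|) :
    |sin φ| + p * |cos φ| ≤ p := by
  have hp : 0 ≤ p := by nlinarith [abs_nonneg (sin φ), abs_sin_le_one φ]
  nlinarith [mul_le_mul_of_nonneg_left (abs_cos_le_one_sub_sq_abs_sin_div_two φ) hp,
    abs_nonneg (sin φ)]

theorem rpow_sub_rpow_le_mul_rpow_sub_one {x y α : ℝ} (hx : 0 ≤ x) (hxy : x ≤ y) (hα : 1 ≤ α) :
    y ^ α - x ^ α ≤ α * (y - x) * y ^ (α - 1) := by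
  obtain rfl | hlt := hxy.eq_or_lt
  · simp
  have hy : 0 < y := hx.trans_lt hlt
  have bernoulli := one_add_mul_self_le_rpow_one_add (s := (x - y) / y)
    (by rw [le_div_iff₀ hy]; linarith) hα
  rw [show 1 + (x - y) / y = x / y by field_simp; ring, div_rpow hx hy.le,
    le_div_iff₀ (rpow_pos_of_pos hy α)] at bernoulli
  rw [rpow_sub_one hy.ne']
  have : (1 + α * ((x - y) / y)) * y ^ α = y ^ α - α * (y - x) * (y ^ α / y) := by
    field_simp; ring
  linarith

theorem rpow_add_two_div_sub_rpow_le {β δ p : ℝ} (hβ : -1 ≤ β) (hδ : 0 < δ) (hp : δ ≤ p) :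
    (p + 2 / p) ^ (2 + β) - p ^ (2 + β) ≤
      2 * (2 + β) * (1 + 2 / δ ^ 2) ^ (1 + β) * p ^ β := by
  have hp0 : 0 < p := hδ.trans_le hp
  have hfactor : p + 2 / p = p * (1 + 2 / p ^ 2) := by field_simp
  calc (p + 2 / p) ^ (2 + β) - p ^ (2 + β)
      ≤ (2 + β) * (p + 2 / p - p) * (p + 2 / p) ^ (2 + β - 1) :=
        rpow_sub_rpow_le_mul_rpow_sub_one hp0.le (le_add_of_nonneg_right (by positivity))
          (by linarith)
    _ = 2 * (2 + β) * (1 + 2 / p ^ 2) ^ (1 + β) * p ^ β := by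
        rw [show 2 + β - 1 = 1 + β by ring, hfactor, mul_rpow hp0.le (by positivity),
          rpow_add hp0, rpow_one]
        field_simp
        ring
    _ ≤ 2 * (2 + β) * (1 + 2 / δ ^ 2) ^ (1 + β) * p ^ β := by
        gcongr <;> linarith

theorem stmt15_general (β δ : ℝ) (hβ : 0 < β) (hδ0 : 0 < δ) :
    ∃ C : ℝ, 0 < C ∧ ∀ φ p : ℝ, Real.sin φ ≠ 0 → δ ≤ p →
      |Real.sin φ| + p * |Real.cos φ| ≤
        (p ^ (2 + β) + C / |Real.sin φ| ^ β) ^ (2 + β)⁻¹ := by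
  set K := 2 * (2 + β) * (1 + 2 / δ ^ 2) ^ (1 + β)
  refine ⟨2 ^ β * K, by positivity, fun φ p hsin hp => ?_⟩
  have hs : 0 < |sin φ| := abs_pos.2 hsin
  have hp0 : 0 < p := hδ0.trans_le hp
  rw [le_rpow_inv_iff_of_pos (by positivity) (by positivity) (by linarith)]
  rcases le_or_gt 2 (p * |sin φ|) with hlarge | hsmall
  · calc (|sin φ| + p * |cos φ|) ^ (2 + β) ≤ p ^ (2 + β) := by
          gcongr
          exact abs_sin_add_mul_abs_cos_le_of_two_le_mul hlarge
      _ ≤ _ := le_add_of_nonneg_right (by positivity)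
  · have hsum : |sin φ| + p * |cos φ| ≤ p + 2 / p := by
      have : |sin φ| < 2 / p := by rw [lt_div_iff₀ hp0]; linarith
      nlinarith [abs_cos_le_one φ]
    have hweight : K * p ^ β ≤ 2 ^ β * K / |sin φ| ^ β := by
      rw [le_div_iff₀ (by positivity), mul_assoc, ← mul_rpow hp0.le hs.le, mul_comm (2 ^ β)]
      gcongr
    calc (|sin φ| + p * |cos φ|) ^ (2 + β) ≤ (p + 2 / p) ^ (2 + β) := by gcongr
      _ ≤ p ^ (2 + β) + K * p ^ β := by
          linarith [rpow_add_two_div_sub_rpow_le (β := β) (by linarith) hδ0 hp]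
      _ ≤ _ := by gcongr

theorem stmt15 (β δ : ℝ) (hβ : 0 < β) (hδ0 : 0 < δ) (hδ1 : δ ≤ 1) :
    ∃ C : ℝ, 0 < C ∧ ∀ φ p : ℝ, Real.sin φ ≠ 0 → δ ≤ p →
      |Real.sin φ| + p * |Real.cos φ| ≤
        (p ^ (2 + β) + C / |Real.sin φ| ^ β) ^ (2 + β)⁻¹ :=
  stmt15_general β δ hβ hδ0
end

section
/- For every real γ ≥ 1 there exist θ ∈ R and a strictly increasing sequence of natural numbers (n_ℓ) such that inf over n ≥ 1 of n^γ |sin(nθ)| > 0 and sup over ℓ ≥ 1 of n_ℓ^γ |sin(n_ℓ θ)| < ∞. Moreover in the case γ = 1 the sequence (n_ℓ) may additionally be chosen so that the ratios n_{ℓ+1}/n_ℓ are bounded. -/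
open Real

noncomputable def s16State (γ : ℝ) : ℕ → ℕ × ℕ × ℤ × ℤ
  | 0 => (1, 1, 0, 1)
  | n + 1 =>
    let s := s16State γ n
    (s.2.1, ⌈(s.2.1 : ℝ) ^ (γ - 1)⌉₊ * s.2.1 + s.1,
     s.2.2.2, ⌈(s.2.1 : ℝ) ^ (γ - 1)⌉₊ * s.2.2.2 + s.2.2.1)

noncomputable def s16Q (γ : ℝ) (n : ℕ) : ℕ := (s16State γ n).1
noncomputable def s16P (γ : ℝ) (n : ℕ) : ℤ := (s16State γ n).2.2.1
noncomputable def s16A (γ : ℝ) (n : ℕ) : ℕ := ⌈(s16Q γ n : ℝ) ^ (γ - 1)⌉₊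

lemma s16Q0 (γ : ℝ) : s16Q γ 0 = 1 := rfl
lemma s16Q1 (γ : ℝ) : s16Q γ 1 = 1 := rfl
lemma s16P0 (γ : ℝ) : s16P γ 0 = 0 := rfl
lemma s16P1 (γ : ℝ) : s16P γ 1 = 1 := rfl

lemma s16Qs (γ : ℝ) (n : ℕ) : s16Q γ (n + 1) = (s16State γ n).2.1 := rfl
lemma s16Ps (γ : ℝ) (n : ℕ) : s16P γ (n + 1) = (s16State γ n).2.2.2 := rfl

lemma s16Qrec (γ : ℝ) (n : ℕ) :
    s16Q γ (n + 2) = s16A γ (n + 1) * s16Q γ (n + 1) + s16Q γ n := by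
  show (s16State γ (n+1)).2.1 = _
  simp only [s16State, s16A, s16Qs, s16Q]

lemma s16Prec (γ : ℝ) (n : ℕ) :
    s16P γ (n + 2) = s16A γ (n + 1) * s16P γ (n + 1) + s16P γ n := by
  show (s16State γ (n+1)).2.2.2 = _
  simp only [s16State, s16A, s16Qs, s16Ps, s16Q, s16P]

lemma s16Qpos (γ : ℝ) : ∀ n, 1 ≤ s16Q γ n := by
  intro n
  induction n using Nat.strong_induction_on with
  | _ n ih =>
    match n with
    | 0 => exact le_refl 1
    | 1 => exact le_refl 1
    | n + 2 =>
      rw [s16Qrec]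
      have := ih n (by omega)
      omega

lemma s16Apos (γ : ℝ) (hγ : 1 ≤ γ) (n : ℕ) : 1 ≤ s16A γ n := by
  have h1 : (1 : ℝ) ≤ (s16Q γ n : ℝ) := by exact_mod_cast s16Qpos γ n
  have : (0 : ℝ) < (s16Q γ n : ℝ) ^ (γ - 1) :=
    Real.rpow_pos_of_pos (by linarith) _
  exact Nat.one_le_ceil_iff.2 this

lemma s16A_ge (γ : ℝ) (n : ℕ) : ((s16Q γ n : ℝ)) ^ (γ - 1) ≤ s16A γ n :=
  Nat.le_ceil _

lemma s16A_le (γ : ℝ) (hγ : 1 ≤ γ) (n : ℕ) :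
    (s16A γ n : ℝ) ≤ (s16Q γ n : ℝ) ^ (γ - 1) + 1 := by
  have h0 : (0:ℝ) ≤ (s16Q γ n : ℝ) ^ (γ - 1) := (Real.rpow_pos_of_pos
    (by exact_mod_cast Nat.lt_of_lt_of_le Nat.zero_lt_one (s16Qpos γ n)) _).le
  exact (Nat.ceil_lt_add_one h0).le

lemma s16Qmono (γ : ℝ) (hγ : 1 ≤ γ) (n : ℕ) : s16Q γ (n + 1) < s16Q γ (n + 2) := by
  rw [s16Qrec]
  have h1 := s16Apos γ hγ (n + 1)
  have h2 := s16Qpos γ n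
  have h3 := s16Qpos γ (n + 1)
  nlinarith

lemma s16Qmono' (γ : ℝ) (hγ : 1 ≤ γ) (n : ℕ) : s16Q γ n ≤ s16Q γ (n + 1) := by
  match n with
  | 0 => exact le_refl 1
  | n + 1 => exact (s16Qmono γ hγ n).le

lemma s16Qle (γ : ℝ) (hγ : 1 ≤ γ) {m n : ℕ} (h : m ≤ n) : s16Q γ m ≤ s16Q γ n := by
  induction n with
  | zero => simp_all
  | succ n ih =>
    rcases Nat.lt_or_ge m (n+1) with h' | h'
    · exact le_trans (ih (by omega)) (s16Qmono' γ hγ n)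
    · have : m = n + 1 := by omega
      simp [this]

lemma s16Q_ge_n (γ : ℝ) (hγ : 1 ≤ γ) : ∀ n, n + 1 ≤ s16Q γ (n + 1) := by
  intro n
  induction n with
  | zero => simp [s16Q1]
  | succ n ih =>
    rw [s16Qrec]
    have h1 := s16Apos γ hγ (n + 1)
    have h2 := s16Qpos γ n
    have h3 := s16Qpos γ (n + 1)
    nlinarith

lemma s16Det (γ : ℝ) : ∀ n : ℕ,
    s16P γ (n + 1) * (s16Q γ n : ℤ) - s16P γ n * (s16Q γ (n + 1) : ℤ) = (-1) ^ n := by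
  intro n
  induction n with
  | zero => simp [s16P0, s16P1, s16Q0, s16Q1]
  | succ n ih =>
    rw [s16Qrec, s16Prec]
    push_cast
    push_cast at ih
    ring_nf
    ring_nf at ih
    linarith [ih]

noncomputable def s16x (γ : ℝ) (n : ℕ) : ℝ := (s16P γ n : ℝ) / (s16Q γ n : ℝ)
noncomputable def s16c (γ : ℝ) (n : ℕ) : ℝ := 1 / ((s16Q γ n : ℝ) * (s16Q γ (n + 1) : ℝ))

lemma s16QR (γ : ℝ) (n : ℕ) : (0 : ℝ) < (s16Q γ n : ℝ) := by
  exact_mod_cast Nat.lt_of_lt_of_le Nat.zero_lt_one (s16Qpos γ n)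

lemma s16c_pos (γ : ℝ) (n : ℕ) : 0 < s16c γ n :=
  div_pos one_pos (mul_pos (s16QR γ n) (s16QR γ (n + 1)))

lemma s16c_anti (γ : ℝ) (hγ : 1 ≤ γ) (n : ℕ) : s16c γ (n + 1) ≤ s16c γ n := by
  apply one_div_le_one_div_of_le (mul_pos (s16QR γ n) (s16QR γ (n + 1)))
  have h1 : (s16Q γ n : ℝ) ≤ s16Q γ (n + 1) := by exact_mod_cast s16Qmono' γ hγ n
  have h2 : (s16Q γ (n + 1) : ℝ) ≤ s16Q γ (n + 2) := by exact_mod_cast s16Qmono' γ hγ (n + 1)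
  nlinarith [s16QR γ n, s16QR γ (n + 1), s16QR γ (n + 2)]

lemma s16xdiff (γ : ℝ) (n : ℕ) :
    s16x γ (n + 1) - s16x γ n = (-1) ^ n * s16c γ n := by
  have hd := s16Det γ n
  have h1 := (s16QR γ n).ne'
  have h2 := (s16QR γ (n + 1)).ne'
  have hdr : (s16P γ (n+1) : ℝ) * (s16Q γ n : ℝ) - (s16P γ n : ℝ) * (s16Q γ (n+1) : ℝ)
      = (-1) ^ n := by exact_mod_cast congrArg (Int.cast : ℤ → ℝ) hd
  unfold s16x s16c
  field_simp
  nlinarith [hdr, mul_pos (s16QR γ n) (s16QR γ (n+1))]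

lemma s16Qgeom (γ : ℝ) (hγ : 1 ≤ γ) : ∀ n, 2 ^ n ≤ s16Q γ n * s16Q γ (n + 1) := by
  intro n
  induction n with
  | zero => simp [s16Q0, s16Q1]
  | succ n ih =>
    have h1 : s16Q γ (n + 2) ≥ s16Q γ (n + 1) + s16Q γ n := by
      rw [s16Qrec]
      have := s16Apos γ hγ (n + 1)
      nlinarith [s16Qpos γ (n+1)]
    have h2 : s16Q γ n ≤ s16Q γ (n + 1) := s16Qmono' γ hγ n
    calc 2 ^ (n+1) = 2 * 2 ^ n := by ring
    _ ≤ 2 * (s16Q γ n * s16Q γ (n + 1)) := by omega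
    _ ≤ s16Q γ (n + 1) * s16Q γ (n + 2) := by nlinarith [s16Qpos γ n]

lemma s16c_geom (γ : ℝ) (hγ : 1 ≤ γ) (n : ℕ) : s16c γ n ≤ 1 * (1 / 2) ^ n := by
  rw [one_mul, div_pow, one_pow]
  unfold s16c
  apply one_div_le_one_div_of_le (by positivity)
  exact_mod_cast s16Qgeom γ hγ n

lemma s16cauchy (γ : ℝ) (hγ : 1 ≤ γ) : CauchySeq (s16x γ) := by
  apply cauchySeq_of_le_geometric (1/2) 1 (by norm_num)
  intro n
  rw [Real.dist_eq]
  have := s16xdiff γ n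
  have h2 := s16c_geom γ hγ n
  have h3 := (s16c_pos γ n).le
  have : |s16x γ n - s16x γ (n + 1)| = s16c γ n := by
    rw [abs_sub_comm, this, abs_mul, abs_pow, abs_neg, abs_one, one_pow, one_mul,
      abs_of_nonneg h3]
  linarith [this]

lemma s16fin (γ : ℝ) (hγ : 1 ≤ γ) : ∀ d n : ℕ,
    (0 ≤ (-1 : ℝ) ^ n * (s16x γ (n + d) - s16x γ n)) ∧
    ((-1 : ℝ) ^ n * (s16x γ (n + d) - s16x γ n) ≤ s16c γ n) ∧
    (1 ≤ d → s16c γ n - s16c γ (n + 1) ≤ (-1 : ℝ) ^ n * (s16x γ (n + d) - s16x γ n)) := by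
  intro d
  induction d with
  | zero =>
    intro n
    refine ⟨by simp, by simp [(s16c_pos γ n).le], by omega⟩
  | succ d ih =>
    intro n
    obtain ⟨h1, h2, _⟩ := ih (n + 1)
    have key : (-1 : ℝ) ^ n * (s16x γ (n + (d + 1)) - s16x γ n)
        = s16c γ n - (-1 : ℝ) ^ (n + 1) * (s16x γ (n + 1 + d) - s16x γ (n + 1)) := by
      have hx := s16xdiff γ n
      have hnd : n + (d + 1) = n + 1 + d := by omega
      have hsq : ((-1 : ℝ)) ^ n * ((-1 : ℝ)) ^ n = 1 := by
        rw [← pow_add, ← two_mul, pow_mul]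
        norm_num
      rw [hnd, pow_succ]
      linear_combination ((-1 : ℝ) ^ n) * hx + (s16c γ n) * hsq
    have hca := s16c_anti γ hγ n
    refine ⟨?_, ?_, fun _ => ?_⟩
    · rw [key]; linarith
    · rw [key]; linarith
    · rw [key]; linarith

lemma s16bounds (γ : ℝ) (hγ : 1 ≤ γ) {θ' : ℝ}
    (hθ : Filter.Tendsto (s16x γ) Filter.atTop (nhds θ')) (n : ℕ) :
    s16c γ n - s16c γ (n + 1) ≤ (-1 : ℝ) ^ n * (θ' - s16x γ n) ∧
    (-1 : ℝ) ^ n * (θ' - s16x γ n) ≤ s16c γ n := by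
  have hg : Filter.Tendsto (fun m => (-1 : ℝ) ^ n * (s16x γ m - s16x γ n))
      Filter.atTop (nhds ((-1 : ℝ) ^ n * (θ' - s16x γ n))) := by
    exact (hθ.sub_const _).const_mul _
  constructor
  · apply ge_of_tendsto hg
    filter_upwards [Filter.eventually_ge_atTop (n + 1)] with m hm
    have := (s16fin γ hγ (m - n) n).2.2 (by omega)
    have hmn : n + (m - n) = m := by omega
    rwa [hmn] at this
  · apply le_of_tendsto hg
    filter_upwards [Filter.eventually_ge_atTop (n + 1)] with m hm
    have := (s16fin γ hγ (m - n) n).2.1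
    have hmn : n + (m - n) = m := by omega
    rwa [hmn] at this

lemma s16e (γ : ℝ) (hγ : 1 ≤ γ) {θ' : ℝ}
    (hθ : Filter.Tendsto (s16x γ) Filter.atTop (nhds θ')) (n : ℕ) :
    1 / (2 * (s16Q γ (n + 1) : ℝ)) ≤ (-1 : ℝ) ^ n * ((s16Q γ n : ℝ) * θ' - s16P γ n) ∧
    (-1 : ℝ) ^ n * ((s16Q γ n : ℝ) * θ' - s16P γ n) ≤ 1 / (s16Q γ (n + 1) : ℝ) := by
  obtain ⟨hl, hu⟩ := s16bounds γ hγ hθ n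
  have hQn := s16QR γ n
  have hQn1 := s16QR γ (n + 1)
  have hQn2 := s16QR γ (n + 2)
  have hxe : (s16Q γ n : ℝ) * s16x γ n = s16P γ n := by
    unfold s16x; field_simp
  have key : (-1 : ℝ) ^ n * ((s16Q γ n : ℝ) * θ' - s16P γ n)
      = (s16Q γ n : ℝ) * ((-1 : ℝ) ^ n * (θ' - s16x γ n)) := by
    rw [← hxe]; ring
  have hc : s16c γ n = 1 / ((s16Q γ n : ℝ) * (s16Q γ (n + 1) : ℝ)) := rfl
  have hc1 : s16c γ (n + 1) = 1 / ((s16Q γ (n + 1) : ℝ) * (s16Q γ (n + 2) : ℝ)) := rfl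
  have hQ2ge : 2 * (s16Q γ n : ℝ) ≤ (s16Q γ (n + 2) : ℝ) := by
    have h1 : 2 * s16Q γ n ≤ s16Q γ (n + 2) := by
      rw [s16Qrec]
      have := s16Apos γ hγ (n + 1)
      have := s16Qle γ hγ (Nat.le_succ n)
      nlinarith
    exact_mod_cast h1
  constructor
  · rw [key]
    calc 1 / (2 * (s16Q γ (n + 1) : ℝ))
        ≤ (s16Q γ n : ℝ) * (s16c γ n - s16c γ (n + 1)) := by
          have e1 : (s16Q γ n : ℝ) * (s16c γ n - s16c γ (n + 1)) - 1 / (2 * (s16Q γ (n + 1) : ℝ))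
              = ((s16Q γ (n + 2) : ℝ) - 2 * (s16Q γ n : ℝ))
                / (2 * (s16Q γ (n + 1) : ℝ) * (s16Q γ (n + 2) : ℝ)) := by
            rw [hc, hc1]; field_simp; ring
          have e2 : (0:ℝ) ≤ ((s16Q γ (n + 2) : ℝ) - 2 * (s16Q γ n : ℝ))
                / (2 * (s16Q γ (n + 1) : ℝ) * (s16Q γ (n + 2) : ℝ)) :=
            div_nonneg (by linarith) (by positivity)
          linarith
    _ ≤ (s16Q γ n : ℝ) * ((-1 : ℝ) ^ n * (θ' - s16x γ n)) := by
          apply mul_le_mul_of_nonneg_left hl hQn.le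
  · rw [key]
    calc (s16Q γ n : ℝ) * ((-1 : ℝ) ^ n * (θ' - s16x γ n))
        ≤ (s16Q γ n : ℝ) * s16c γ n := mul_le_mul_of_nonneg_left hu hQn.le
    _ = 1 / (s16Q γ (n + 1) : ℝ) := by rw [hc]; field_simp

set_option maxHeartbeats 1000000 in
lemma s16best (γ : ℝ) (hγ : 1 ≤ γ) {θ' : ℝ}
    (hθ : Filter.Tendsto (s16x γ) Filter.atTop (nhds θ')) (n : ℕ) (q p : ℤ)
    (hq1 : 1 ≤ q) (hq2 : q < (s16Q γ (n + 1) : ℤ)) :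
    1 / (2 * (s16Q γ (n + 1) : ℝ)) ≤ |(q : ℝ) * θ' - (p : ℝ)| := by
  have hD := s16Det γ n
  have hsq : ((-1 : ℤ)) ^ n * ((-1 : ℤ)) ^ n = 1 := by
    rw [← pow_add, ← two_mul, pow_mul]; norm_num
  have hsqR : ((-1 : ℝ)) ^ n * ((-1 : ℝ)) ^ n = 1 := by
    rw [← pow_add, ← two_mul, pow_mul]; norm_num
  obtain ⟨X, Y, hXQ, hXP⟩ : ∃ X Y : ℤ,
      X * (s16Q γ n : ℤ) + Y * (s16Q γ (n + 1) : ℤ) = q ∧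
      X * s16P γ n + Y * s16P γ (n + 1) = p := by
    refine ⟨(-1) ^ n * (s16P γ (n + 1) * q - (s16Q γ (n + 1) : ℤ) * p),
      (-1) ^ n * ((s16Q γ n : ℤ) * p - s16P γ n * q), ?_, ?_⟩
    · linear_combination ((-1 : ℤ) ^ n * q) * hD + q * hsq
    · linear_combination ((-1 : ℤ) ^ n * p) * hD + p * hsq
  obtain ⟨u, hu1, hu2, hue⟩ : ∃ u : ℝ, 1 / (2 * (s16Q γ (n + 1) : ℝ)) ≤ u ∧
      u ≤ 1 / (s16Q γ (n + 1) : ℝ) ∧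
      (s16Q γ n : ℝ) * θ' - s16P γ n = (-1 : ℝ) ^ n * u := by
    obtain ⟨h1, h2⟩ := s16e γ hγ hθ n
    exact ⟨_, h1, h2, by linear_combination (-((s16Q γ n : ℝ) * θ' - s16P γ n)) * hsqR⟩
  obtain ⟨v, hv1, hv2, hve⟩ : ∃ v : ℝ, 1 / (2 * (s16Q γ (n + 2) : ℝ)) ≤ v ∧
      v ≤ 1 / (s16Q γ (n + 2) : ℝ) ∧
      (s16Q γ (n + 1) : ℝ) * θ' - s16P γ (n + 1) = -((-1 : ℝ) ^ n * v) := by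
    obtain ⟨h1, h2⟩ := s16e γ hγ hθ (n + 1)
    refine ⟨_, h1, h2, ?_⟩
    rw [pow_succ] at h1 h2 ⊢
    linear_combination (-((s16Q γ (n + 1) : ℝ) * θ' - s16P γ (n + 1))) * hsqR
  have hXQ' : (X : ℝ) * (s16Q γ n : ℝ) + (Y : ℝ) * (s16Q γ (n + 1) : ℝ) = (q : ℝ) := by
    exact_mod_cast congrArg (Int.cast : ℤ → ℝ) hXQ
  have hXP' : (X : ℝ) * (s16P γ n : ℝ) + (Y : ℝ) * (s16P γ (n + 1) : ℝ) = (p : ℝ) := by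
    exact_mod_cast congrArg (Int.cast : ℤ → ℝ) hXP
  have hQn1 := s16QR γ (n + 1)
  have hQn2 := s16QR γ (n + 2)
  have hupos : 0 < u := lt_of_lt_of_le (by positivity) hu1
  have hvpos : 0 < v := lt_of_lt_of_le (by positivity) hv1
  have hkey : (q : ℝ) * θ' - (p : ℝ) = (-1 : ℝ) ^ n * ((X : ℝ) * u - (Y : ℝ) * v) := by
    linear_combination (-θ') * hXQ' + hXP' + (X : ℝ) * hue + (Y : ℝ) * hve
  have habs : |(q : ℝ) * θ' - (p : ℝ)| = |(X : ℝ) * u - (Y : ℝ) * v| := by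
    rw [hkey, abs_mul, abs_pow, abs_neg, abs_one, one_pow, one_mul]
  rw [habs]
  have hQnZ : (1 : ℤ) ≤ (s16Q γ n : ℤ) := by exact_mod_cast s16Qpos γ n
  have hQn1Z : (1 : ℤ) ≤ (s16Q γ (n + 1) : ℤ) := by exact_mod_cast s16Qpos γ (n + 1)
  have main : u ≤ |(X : ℝ) * u - (Y : ℝ) * v| := by
    rcases lt_trichotomy Y 0 with hY0 | hY0 | hY0
    · rcases lt_trichotomy X 0 with hX0 | hX0 | hX0
      · exfalso; nlinarith
      · exfalso
        rw [hX0] at hXQ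
        simp only [zero_mul, zero_add] at hXQ
        nlinarith
      · have hXR : (1 : ℝ) ≤ (X : ℝ) := by exact_mod_cast hX0
        have hYR : (Y : ℝ) ≤ -1 := by exact_mod_cast (by omega : Y ≤ -1)
        have e1 : 1 * u ≤ (X : ℝ) * u := mul_le_mul_of_nonneg_right hXR hupos.le
        have e2 : (Y : ℝ) * v ≤ -1 * v := mul_le_mul_of_nonneg_right hYR hvpos.le
        have h : u ≤ (X : ℝ) * u - (Y : ℝ) * v := by linarith
        exact le_trans h (le_abs_self _)
    · have hX1 : 1 ≤ X := by
        rw [hY0] at hXQ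
        simp only [zero_mul, add_zero] at hXQ
        nlinarith
      have hXR : (1 : ℝ) ≤ (X : ℝ) := by exact_mod_cast hX1
      rw [hY0]
      have e1 : 1 * u ≤ (X : ℝ) * u := mul_le_mul_of_nonneg_right hXR hupos.le
      have h : u ≤ (X : ℝ) * u := by linarith
      simpa using le_trans h (le_abs_self _)
    · rcases lt_trichotomy X 0 with hX0 | hX0 | hX0
      · have hXR : (X : ℝ) ≤ -1 := by exact_mod_cast (by omega : X ≤ -1)
        have hYR : (1 : ℝ) ≤ (Y : ℝ) := by exact_mod_cast hY0
        have e1 : (X : ℝ) * u ≤ -1 * u := mul_le_mul_of_nonneg_right hXR hupos.le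
        have e2 : 1 * v ≤ (Y : ℝ) * v := mul_le_mul_of_nonneg_right hYR hvpos.le
        have h : u ≤ -((X : ℝ) * u - (Y : ℝ) * v) := by linarith
        exact le_trans h (neg_le_abs _)
      · exfalso
        rw [hX0] at hXQ
        simp only [zero_mul, zero_add] at hXQ
        nlinarith
      · exfalso; nlinarith
  exact le_trans hu1 main

lemma s16rpow_shift (γ : ℝ) (m : ℕ) :
    (s16Q γ m : ℝ) ^ (γ - 1) * (s16Q γ m : ℝ) = (s16Q γ m : ℝ) ^ γ := by
  have hx0 : ((s16Q γ m : ℝ)) ≠ 0 := (s16QR γ m).ne'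
  rw [← Real.rpow_add_one hx0 (γ - 1), sub_add_cancel]

lemma s16self_le_rpow (γ : ℝ) (hγ : 1 ≤ γ) (m : ℕ) :
    (s16Q γ m : ℝ) ≤ (s16Q γ m : ℝ) ^ γ := by
  have hQ1 : (1 : ℝ) ≤ (s16Q γ m : ℝ) := by exact_mod_cast s16Qpos γ m
  calc (s16Q γ m : ℝ) = (s16Q γ m : ℝ) ^ (1 : ℝ) := (Real.rpow_one _).symm
  _ ≤ (s16Q γ m : ℝ) ^ γ := Real.rpow_le_rpow_of_exponent_le hQ1 hγ

lemma s16QUB (γ : ℝ) (hγ : 1 ≤ γ) (m : ℕ) :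
    (s16Q γ (m + 2) : ℝ) ≤ 3 * (s16Q γ (m + 1) : ℝ) ^ γ := by
  have hQ1 : (1 : ℝ) ≤ (s16Q γ (m + 1) : ℝ) := by exact_mod_cast s16Qpos γ (m + 1)
  have hA := s16A_le γ hγ (m + 1)
  have hQm : (s16Q γ m : ℝ) ≤ (s16Q γ (m + 1) : ℝ) := by
    exact_mod_cast s16Qmono' γ hγ m
  have hrec : (s16Q γ (m + 2) : ℝ) = (s16A γ (m + 1) : ℝ) * (s16Q γ (m + 1) : ℝ)
      + (s16Q γ m : ℝ) := by exact_mod_cast congrArg (Nat.cast : ℕ → ℝ) (s16Qrec γ m)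
  have hpow := s16rpow_shift γ (m + 1)
  have hself := s16self_le_rpow γ hγ (m + 1)
  nlinarith [s16QR γ (m + 1)]

lemma s16QLB (γ : ℝ) (hγ : 1 ≤ γ) (m : ℕ) :
    (s16Q γ (m + 1) : ℝ) ^ γ ≤ (s16Q γ (m + 2) : ℝ) := by
  have hA := s16A_ge γ (m + 1)
  have hrec : (s16Q γ (m + 2) : ℝ) = (s16A γ (m + 1) : ℝ) * (s16Q γ (m + 1) : ℝ)
      + (s16Q γ m : ℝ) := by exact_mod_cast congrArg (Nat.cast : ℕ → ℝ) (s16Qrec γ m)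
  have hpow := s16rpow_shift γ (m + 1)
  nlinarith [s16QR γ (m + 1), s16QR γ m]

open Real in
lemma s16sin_low (t : ℝ) : 2 * |t - round t| ≤ |Real.sin (π * t)| := by
  have h := Real.sin_sub_int_mul_pi (π * t) (round t)
  have habs : |Real.sin (π * (t - round t))| = |Real.sin (π * t)| := by
    rw [show π * (t - round t) = π * t - (round t : ℝ) * π by ring, h]
    rw [abs_mul]
    rcases Int.even_or_odd (round t) with he | ho
    · rw [he.neg_one_zpow, abs_one, one_mul]
    · rw [ho.neg_one_zpow, abs_neg, abs_one, one_mul]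
  have hd : |π * (t - round t)| ≤ π / 2 := by
    rw [abs_mul, abs_of_pos Real.pi_pos]
    have := abs_sub_round t
    nlinarith [Real.pi_pos]
  have := Real.mul_abs_le_abs_sin hd
  rw [habs] at this
  rw [abs_mul, abs_of_pos Real.pi_pos] at this
  have hπ : (2 / π) * (π * |t - round t|) = 2 * |t - round t| := by
    field_simp
  linarith [hπ ▸ this]

open Real in
lemma s16sin_up (t : ℝ) (p : ℤ) : |Real.sin (π * t)| ≤ π * |t - p| := by
  have h := Real.sin_sub_int_mul_pi (π * t) p
  have habs : |Real.sin (π * (t - p))| = |Real.sin (π * t)| := by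
    rw [show π * (t - p) = π * t - (p : ℝ) * π by ring, h]
    rw [abs_mul]
    rcases Int.even_or_odd p with he | ho
    · rw [he.neg_one_zpow, abs_one, one_mul]
    · rw [ho.neg_one_zpow, abs_neg, abs_one, one_mul]
  calc |Real.sin (π * t)| = |Real.sin (π * (t - p))| := habs.symm
  _ ≤ |π * (t - p)| := Real.abs_sin_le_abs
  _ = π * |t - p| := by rw [abs_mul, abs_of_pos Real.pi_pos]

lemma s16main (γ : ℝ) (hγ : 1 ≤ γ) :
    ∃ θ : ℝ, ∃ nl : ℕ → ℕ, StrictMono nl ∧ (∀ ℓ, 1 ≤ nl ℓ) ∧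
      (∃ c : ℝ, 0 < c ∧ ∀ n : ℕ, 1 ≤ n → c ≤ (n : ℝ) ^ γ * |Real.sin ((n : ℝ) * θ)|) ∧
      (∃ K : ℝ, ∀ ℓ : ℕ, (nl ℓ : ℝ) ^ γ * |Real.sin ((nl ℓ : ℝ) * θ)| ≤ K) ∧
      (γ = 1 → ∃ R : ℝ, ∀ ℓ : ℕ, (nl (ℓ + 1) : ℝ) ≤ R * (nl ℓ : ℝ)) := by
  obtain ⟨θ', hθ⟩ := cauchySeq_tendsto_of_complete (s16cauchy γ hγ)
  refine ⟨Real.pi * θ', fun ℓ => s16Q γ (ℓ + 1), ?_, ?_, ?_, ?_, ?_⟩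
  · exact strictMono_nat_of_lt_succ (fun ℓ => s16Qmono γ hγ ℓ)
  · exact fun ℓ => s16Qpos γ (ℓ + 1)
  · -- lower bound
    refine ⟨1/3, by norm_num, ?_⟩
    intro N hN
    have hP1 : s16Q γ 1 ≤ N := by rw [s16Q1]; exact hN
    set n := Nat.findGreatest (fun m => s16Q γ m ≤ N) N with hn
    have hn1 : 1 ≤ n := Nat.le_findGreatest hN hP1
    have hQnN : s16Q γ n ≤ N :=
      Nat.findGreatest_spec (P := fun m => s16Q γ m ≤ N) hN hP1
    have hNlt : N < s16Q γ (n + 1) := by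
      by_cases hc : n + 1 ≤ N
      · have h := Nat.findGreatest_is_greatest (P := fun m => s16Q γ m ≤ N)
          (Nat.lt_succ_self n) hc
        simp only [not_le] at h
        exact h
      · have hnN : n ≤ N := Nat.findGreatest_le N
        have hnn : n = N := by omega
        rw [hnn]
        have := s16Q_ge_n γ hγ N
        omega
    clear_value n
    obtain ⟨m, rfl⟩ : ∃ m, n = m + 1 := ⟨n - 1, by omega⟩
    have hbest := s16best γ hγ hθ (m + 1) (N : ℤ) (round ((N : ℝ) * θ'))
      (by exact_mod_cast hN) (by exact_mod_cast hNlt)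
    have hsin := s16sin_low ((N : ℝ) * θ')
    have hNpos : (0 : ℝ) < (N : ℝ) := by exact_mod_cast hN
    have hNg : (0 : ℝ) < (N : ℝ) ^ γ := Real.rpow_pos_of_pos hNpos γ
    have hQN : (s16Q γ (m + 1) : ℝ) ≤ (N : ℝ) := by exact_mod_cast hQnN
    have hQ1pos := s16QR γ (m + 1)
    have hQ2pos := s16QR γ (m + 2)
    have h3 : (s16Q γ (m + 2) : ℝ) ≤ 3 * (N : ℝ) ^ γ := by
      calc (s16Q γ (m + 2) : ℝ) ≤ 3 * (s16Q γ (m + 1) : ℝ) ^ γ := s16QUB γ hγ m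
      _ ≤ 3 * (N : ℝ) ^ γ := by
          have := Real.rpow_le_rpow hQ1pos.le hQN (by linarith : (0:ℝ) ≤ γ)
          linarith
    have hNb : |(N : ℝ) * θ' - (round ((N : ℝ) * θ') : ℝ)| ≥ 1 / (2 * (s16Q γ (m + 2) : ℝ)) := by
      have : (((N : ℤ) : ℝ)) = (N : ℝ) := by push_cast; ring
      rw [← this]
      exact hbest
    have hs1 : 1 / (3 * (N : ℝ) ^ γ) ≤ |Real.sin (Real.pi * ((N : ℝ) * θ'))| := by
      have h4 : 1 / (3 * (N : ℝ) ^ γ) ≤ 1 / (s16Q γ (m + 2) : ℝ) :=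
        one_div_le_one_div_of_le hQ2pos h3
      have h5 : 1 / (s16Q γ (m + 2) : ℝ) ≤ 2 * |(N : ℝ) * θ' - (round ((N : ℝ) * θ') : ℝ)| := by
        have : 1 / (s16Q γ (m + 2) : ℝ) = 2 * (1 / (2 * (s16Q γ (m + 2) : ℝ))) := by
          field_simp
        rw [this]
        linarith [hNb]
      linarith [hsin]
    calc (1 : ℝ)/3 = (N : ℝ) ^ γ * (1 / (3 * (N : ℝ) ^ γ)) := by field_simp
    _ ≤ (N : ℝ) ^ γ * |Real.sin (Real.pi * ((N : ℝ) * θ'))| :=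
        mul_le_mul_of_nonneg_left hs1 hNg.le
    _ = (N : ℝ) ^ γ * |Real.sin ((N : ℝ) * (Real.pi * θ'))| := by ring_nf
  · -- upper bound
    refine ⟨Real.pi, fun ℓ => ?_⟩
    obtain ⟨hu1, hu2⟩ := s16e γ hγ hθ (ℓ + 1)
    have hQ2pos := s16QR γ (ℓ + 2)
    have hupos : (0:ℝ) < (-1 : ℝ) ^ (ℓ + 1) * ((s16Q γ (ℓ + 1) : ℝ) * θ' - s16P γ (ℓ + 1)) :=
      lt_of_lt_of_le (by positivity) hu1
    have habs : |(s16Q γ (ℓ + 1) : ℝ) * θ' - s16P γ (ℓ + 1)| ≤ 1 / (s16Q γ (ℓ + 2) : ℝ) := by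
      have he : |(-1 : ℝ) ^ (ℓ + 1) * ((s16Q γ (ℓ + 1) : ℝ) * θ' - s16P γ (ℓ + 1))|
          = |(s16Q γ (ℓ + 1) : ℝ) * θ' - s16P γ (ℓ + 1)| := by
        rw [abs_mul, abs_pow, abs_neg, abs_one, one_pow, one_mul]
      rw [← he, abs_of_pos hupos]
      exact hu2
    have hsin := s16sin_up ((s16Q γ (ℓ + 1) : ℝ) * θ') (s16P γ (ℓ + 1))
    have hQLB := s16QLB γ hγ ℓ
    have hQg : (0 : ℝ) < (s16Q γ (ℓ + 1) : ℝ) ^ γ := Real.rpow_pos_of_pos (s16QR γ (ℓ + 1)) γ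
    have hchain : |Real.sin (Real.pi * ((s16Q γ (ℓ + 1) : ℝ) * θ'))|
        ≤ Real.pi * (1 / (s16Q γ (ℓ + 2) : ℝ)) := by
      calc |Real.sin (Real.pi * ((s16Q γ (ℓ + 1) : ℝ) * θ'))|
          ≤ Real.pi * |(s16Q γ (ℓ + 1) : ℝ) * θ' - s16P γ (ℓ + 1)| := hsin
      _ ≤ Real.pi * (1 / (s16Q γ (ℓ + 2) : ℝ)) :=
          mul_le_mul_of_nonneg_left habs Real.pi_pos.le
    calc (s16Q γ (ℓ + 1) : ℝ) ^ γ * |Real.sin ((s16Q γ (ℓ + 1) : ℝ) * (Real.pi * θ'))|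
        = (s16Q γ (ℓ + 1) : ℝ) ^ γ * |Real.sin (Real.pi * ((s16Q γ (ℓ + 1) : ℝ) * θ'))| := by
          ring_nf
    _ ≤ (s16Q γ (ℓ + 1) : ℝ) ^ γ * (Real.pi * (1 / (s16Q γ (ℓ + 2) : ℝ))) :=
        mul_le_mul_of_nonneg_left hchain hQg.le
    _ = Real.pi * ((s16Q γ (ℓ + 1) : ℝ) ^ γ / (s16Q γ (ℓ + 2) : ℝ)) := by ring
    _ ≤ Real.pi * 1 := by
        apply mul_le_mul_of_nonneg_left _ Real.pi_pos.le
        rw [div_le_one hQ2pos]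
        exact hQLB
    _ = Real.pi := mul_one _
  · -- ratio bound for γ = 1
    intro hγ1
    subst hγ1
    refine ⟨2, fun ℓ => ?_⟩
    have hA : s16A 1 (ℓ + 1) = 1 := by
      unfold s16A
      norm_num
    have hrec := s16Qrec 1 ℓ
    rw [hA, one_mul] at hrec
    have hle : s16Q 1 ℓ ≤ s16Q 1 (ℓ + 1) := s16Qmono' 1 le_rfl ℓ
    have : (s16Q 1 (ℓ + 2) : ℝ) ≤ 2 * (s16Q 1 (ℓ + 1) : ℝ) := by
      rw [hrec]
      push_cast
      have : (s16Q 1 ℓ : ℝ) ≤ (s16Q 1 (ℓ + 1) : ℝ) := by exact_mod_cast hle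
      linarith
    exact this



theorem stmt16 (γ : ℝ) (hγ : 1 ≤ γ) :
    (∃ θ : ℝ, ∃ nl : ℕ → ℕ, StrictMono nl ∧ (∀ ℓ, 1 ≤ nl ℓ) ∧
      (∃ c : ℝ, 0 < c ∧ ∀ n : ℕ, 1 ≤ n → c ≤ (n : ℝ) ^ γ * |Real.sin ((n : ℝ) * θ)|) ∧
      (∃ K : ℝ, ∀ ℓ : ℕ, (nl ℓ : ℝ) ^ γ * |Real.sin ((nl ℓ : ℝ) * θ)| ≤ K)) ∧
    (γ = 1 → ∃ θ : ℝ, ∃ nl : ℕ → ℕ, StrictMono nl ∧ (∀ ℓ, 1 ≤ nl ℓ) ∧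
      (∃ c : ℝ, 0 < c ∧ ∀ n : ℕ, 1 ≤ n → c ≤ (n : ℝ) ^ γ * |Real.sin ((n : ℝ) * θ)|) ∧
      (∃ K : ℝ, ∀ ℓ : ℕ, (nl ℓ : ℝ) ^ γ * |Real.sin ((nl ℓ : ℝ) * θ)| ≤ K) ∧
      (∃ R : ℝ, ∀ ℓ : ℕ, (nl (ℓ + 1) : ℝ) ≤ R * (nl ℓ : ℝ))) := by
  obtain ⟨θ, nl, h1, h2, h3, h4, h5⟩ := s16main γ hγ
  exact ⟨⟨θ, nl, h1, h2, h3, h4⟩, fun h => ⟨θ, nl, h1, h2, h3, h4, h5 h⟩⟩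
end
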